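/- arXiv:1011.1313 — 4 statements merged into one kernel-verified Lean document; each statement's English description precedes it below -/
import Mathlib

section
/- Every Γ-invariant C² solution u of the Gauss equation Δu + 1 − e^{2u} − t²y⁴|φ(z)|²e^{−2u} = 0 satisfies inf_ℍ u ≥ −(1/2)·log(1 + Λ²), where Λ = sup_{z∈ℍ} λ(z) is the supremum of the principal curvature function λ(z) = t y²|φ(z)| e^{−2u(z)} (finite by Γ-invariance and cocompactness). In particular, if a sequence of solutions u_n with parameters t_n → 0 satisfies sup_ℍ |u_n| → ∞, then sup_ℍ λ_n → ∞, i.e., the principal curvatures (and the magnitudes of the intrinsic curvatures K_n = −1 − λ_n²) of the corresponding minimal immersions blow up. -/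
open Complex MeasureTheory Real Filter

noncomputable section

/-- The upper half-plane, viewed as a subset of `ℂ`. -/
def UH : Set ℂ := {z : ℂ | 0 < z.im}

/-- The Möbius action of `SL(2, ℝ)` on the upper half-plane (as a map on `ℂ`). -/
def moebius (γ : Matrix.SpecialLinearGroup (Fin 2) ℝ) (z : ℂ) : ℂ :=
  (((γ 0 0 : ℝ) : ℂ) * z + ((γ 0 1 : ℝ) : ℂ)) / (((γ 1 0 : ℝ) : ℂ) * z + ((γ 1 1 : ℝ) : ℂ))

/-- The hyperbolic Laplacian `Δu = y² (∂²u/∂x² + ∂²u/∂y²)`. -/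
def hypLap (u : ℂ → ℝ) (z : ℂ) : ℝ :=
  z.im ^ 2 * (iteratedFDeriv ℝ 2 u z ![1, 1] + iteratedFDeriv ℝ 2 u z ![Complex.I, Complex.I])

/-- The squared Euclidean gradient `|∇u|² = (∂u/∂x)² + (∂u/∂y)²`. -/
def gradSq (u : ℂ → ℝ) (z : ℂ) : ℝ :=
  (fderiv ℝ u z 1) ^ 2 + (fderiv ℝ u z Complex.I) ^ 2

/-- `u` is invariant under the Möbius action of the subgroup `Γ` on the upper half-plane. -/
def GammaInv (Γ : Subgroup (Matrix.SpecialLinearGroup (Fin 2) ℝ)) (u : ℂ → ℝ) : Prop :=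
  ∀ γ ∈ Γ, ∀ z ∈ UH, u (moebius γ z) = u z

/-- The Gauss equation `Δu + 1 - e^{2u} - t² y⁴ |φ(z)|² e^{-2u} = 0` on the upper half-plane. -/
def GaussEq (φ : ℂ → ℂ) (t : ℝ) (u : ℂ → ℝ) : Prop :=
  ∀ z ∈ UH, hypLap u z + 1 - Real.exp (2 * u z)
    - t ^ 2 * z.im ^ 4 * ‖φ z‖ ^ 2 * Real.exp (-2 * u z) = 0

/-- Integral over a fundamental domain `D` with respect to the hyperbolic
area measure `dμ = y⁻² dx dy`. -/
def hInt (D : Set ℂ) (f : ℂ → ℝ) : ℝ := ∫ z in D, f z * (z.im ^ 2)⁻¹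

open Topology

/-!
At a minimum point of `u` the Laplacian is nonnegative, and the Gauss equation
`Δu = e^{2u} (1 + λ²) - 1` gives `e^{2u} (1 + λ²) ≥ 1`, i.e. `u ≥ -½ log (1 + Λ²)`; at a maximum
point it gives `e^{2u} ≤ 1`, i.e. `u ≤ 0`. Cocompactness makes both extrema attained and `Λ`
finite. Hence `sup |u| = -inf u ≤ ½ log (1 + Λ²) ≤ log (1 + Λ)`, so `Λ ≥ e^{sup |u|} - 1`, and
the curvatures blow up whenever `sup |u|` does.
-/

theorem IsLocalMin.deriv_deriv_nonneg {g : ℝ → ℝ} {x₀ : ℝ} (hmin : IsLocalMin g x₀)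
    (hc : ContinuousAt g x₀) : 0 ≤ deriv (deriv g) x₀ := by
  by_contra! hneg
  have hsign := eventually_nhdsWithin_sign_eq_of_deriv_neg hneg hmin.deriv_eq_zero
  obtain ⟨ε, hε, hball⟩ := Metric.eventually_nhds_iff_ball.1 (hsign.and hmin)
  set b := x₀ + ε / 2 with hb
  have hxb : x₀ < b := by linarith
  have hmem : ∀ x ∈ Set.Ioc x₀ b, x ∈ Metric.ball x₀ ε := fun x hx => by
    rw [Metric.mem_ball, Real.dist_eq, abs_of_pos (sub_pos.2 hx.1)]
    linarith [hx.2]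
  have hderiv : ∀ x ∈ Set.Ioc x₀ b, deriv g x < 0 := fun x hx => by
    have hs := (hball x (hmem x hx)).1
    rwa [sign_neg (sub_neg.2 hx.1), sign_eq_neg_one_iff] at hs
  have hanti : StrictAntiOn g (Set.Icc x₀ b) := by
    refine strictAntiOn_of_deriv_neg (convex_Icc _ _) (fun x hx => ?_) fun x hx => ?_
    · rcases hx.1.eq_or_lt with rfl | hlt
      · exact hc.continuousWithinAt
      · exact (differentiableAt_of_deriv_ne_zero
          (hderiv x ⟨hlt, hx.2⟩).ne).continuousAt.continuousWithinAt
    · rw [interior_Icc] at hx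
      exact hderiv x (Set.Ioo_subset_Ioc_self hx)
  exact (hanti (Set.left_mem_Icc.2 hxb.le) (Set.right_mem_Icc.2 hxb.le) hxb).not_ge
    (hball b (hmem b ⟨hxb, le_rfl⟩)).2

section SecondDerivative

variable {E : Type*} [NormedAddCommGroup E] [NormedSpace ℝ E] {u : E → ℝ} {z : E}

theorem deriv_deriv_apply_add_smul (v : E) (hu : ContDiffAt ℝ 2 u z) :
    deriv (deriv fun s : ℝ => u (z + s • v)) 0 = iteratedFDeriv ℝ 2 u z ![v, v] := by
  have hline (s : ℝ) : HasDerivAt (fun s : ℝ => z + s • v) v s := by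
    simpa using ((hasDerivAt_id s).smul_const v).const_add z
  have hto : Tendsto (fun s : ℝ => z + s • v) (𝓝 0) (𝓝 z) := by
    simpa using (hline 0).continuousAt.tendsto
  have hfirst : deriv (fun s : ℝ => u (z + s • v)) =ᶠ[𝓝 0]
      fun s => fderiv ℝ u (z + s • v) v := by
    filter_upwards [hto.eventually (hu.eventually (by simp))] with s hs
    exact ((hs.differentiableAt (by norm_num)).hasFDerivAt.comp_hasDerivAt s (hline s)).deriv
  have hsecond : HasDerivAt (fun s : ℝ => fderiv ℝ u (z + s • v) v)
      (fderiv ℝ (fderiv ℝ u) z v v) 0 := by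
    have hf : HasFDerivAt (fderiv ℝ u) (fderiv ℝ (fderiv ℝ u) z) (z + (0 : ℝ) • v) := by
      simpa using ((hu.fderiv_right le_rfl).differentiableAt one_ne_zero).hasFDerivAt
    exact (ContinuousLinearMap.apply ℝ ℝ v).hasFDerivAt.comp_hasDerivAt 0
      (hf.comp_hasDerivAt 0 (hline 0))
  rw [hfirst.deriv_eq, hsecond.deriv, iteratedFDeriv_two_apply]
  rfl

theorem IsLocalMin.iteratedFDeriv_two_nonneg (hmin : IsLocalMin u z) (hu : ContDiffAt ℝ 2 u z)
    (v : E) : 0 ≤ iteratedFDeriv ℝ 2 u z ![v, v] := by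
  have hline : ContinuousAt (fun s : ℝ => z + s • v) 0 := by fun_prop
  rw [← deriv_deriv_apply_add_smul v hu]
  refine IsLocalMin.deriv_deriv_nonneg ?_ (hu.continuousAt.comp_of_eq hline (by simp))
  exact IsLocalMin.comp_continuous (g := fun s : ℝ => z + s • v) (by simpa using hmin) hline

theorem IsLocalMax.iteratedFDeriv_two_nonpos (hmax : IsLocalMax u z) (hu : ContDiffAt ℝ 2 u z)
    (v : E) : iteratedFDeriv ℝ 2 u z ![v, v] ≤ 0 := by
  have h := hmax.neg.iteratedFDeriv_two_nonneg hu.neg v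
  rw [show (fun x => -u x) = -u from rfl, iteratedFDeriv_neg_apply] at h
  simpa using h

end SecondDerivative

theorem IsLocalMin.hypLap_nonneg {u : ℂ → ℝ} {z : ℂ} (hmin : IsLocalMin u z)
    (hu : ContDiffAt ℝ 2 u z) : 0 ≤ hypLap u z :=
  mul_nonneg (sq_nonneg _) (add_nonneg (hmin.iteratedFDeriv_two_nonneg hu 1)
    (hmin.iteratedFDeriv_two_nonneg hu Complex.I))

theorem IsLocalMax.hypLap_nonpos {u : ℂ → ℝ} {z : ℂ} (hmax : IsLocalMax u z)
    (hu : ContDiffAt ℝ 2 u z) : hypLap u z ≤ 0 :=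
  mul_nonpos_of_nonneg_of_nonpos (sq_nonneg _) (add_nonpos (hmax.iteratedFDeriv_two_nonpos hu 1)
    (hmax.iteratedFDeriv_two_nonpos hu Complex.I))

theorem isOpen_UH : IsOpen UH :=
  isOpen_lt continuous_const Complex.continuous_im

theorem I_mem_UH : Complex.I ∈ UH := by
  simp [UH]

section Moebius

open UpperHalfPlane

theorem im_moebius (γ : Matrix.SpecialLinearGroup (Fin 2) ℝ) (z : ℂ) :
    (moebius γ z).im = z.im / Complex.normSq (denom γ z) := by
  show (num γ z / denom γ z).im = _
  simpa using UpperHalfPlane.moebius_im γ z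

theorem im_sq_mul_norm_moebius {φ : ℂ → ℂ} (γ : Matrix.SpecialLinearGroup (Fin 2) ℝ) {z : ℂ}
    (hz : z ∈ UH) (hφγ : φ (moebius γ z) = denom γ z ^ 4 * φ z) :
    (moebius γ z).im ^ 2 * ‖φ (moebius γ z)‖ = z.im ^ 2 * ‖φ z‖ := by
  have hd : Complex.normSq (denom γ z) ≠ 0 := normSq_denom_ne_zero γ (ne_of_gt hz)
  rw [im_moebius, hφγ, norm_mul, norm_pow, show ‖denom γ z‖ ^ 4 = (‖denom γ z‖ ^ 2) ^ 2 by ring,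
    Complex.sq_norm]
  field_simp

end Moebius

theorem GammaInv.comp {Γ : Subgroup (Matrix.SpecialLinearGroup (Fin 2) ℝ)} {f : ℂ → ℝ}
    (hf : GammaInv Γ f) (g : ℝ → ℝ) : GammaInv Γ (g ∘ f) :=
  fun γ hγ z hz => congrArg g (hf γ hγ z hz)

def ActsCocompactly (Γ : Subgroup (Matrix.SpecialLinearGroup (Fin 2) ℝ)) : Prop :=
  ∃ K : Set ℂ, K ⊆ UH ∧ IsCompact K ∧ ∀ z ∈ UH, ∃ γ ∈ Γ, moebius γ z ∈ K

theorem ActsCocompactly.isCompact_image {Γ : Subgroup (Matrix.SpecialLinearGroup (Fin 2) ℝ)}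
    (hΓ : ActsCocompactly Γ) {f : ℂ → ℝ} (hf : ContinuousOn f UH) (hinv : GammaInv Γ f) :
    IsCompact (f '' UH) := by
  obtain ⟨K, hKU, hK, hcov⟩ := hΓ
  have himage : f '' UH = f '' K := by
    refine (Set.image_mono hKU).antisymm' ?_
    rintro _ ⟨z, hz, rfl⟩
    obtain ⟨γ, hγ, hγz⟩ := hcov z hz
    exact ⟨moebius γ z, hγz, hinv γ hγ z hz⟩
  rw [himage]
  exact hK.image_of_continuousOn (hf.mono hKU)

theorem ActsCocompactly.exists_isMinOn {Γ : Subgroup (Matrix.SpecialLinearGroup (Fin 2) ℝ)}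
    (hΓ : ActsCocompactly Γ) {f : ℂ → ℝ} (hf : ContinuousOn f UH) (hinv : GammaInv Γ f) :
    ∃ z ∈ UH, IsMinOn f UH z := by
  obtain ⟨_, ⟨z, hz, rfl⟩, hmin⟩ :=
    (hΓ.isCompact_image hf hinv).exists_isLeast ⟨_, Set.mem_image_of_mem f I_mem_UH⟩
  exact ⟨z, hz, fun w hw => hmin (Set.mem_image_of_mem f hw)⟩

theorem ActsCocompactly.exists_isMaxOn {Γ : Subgroup (Matrix.SpecialLinearGroup (Fin 2) ℝ)}
    (hΓ : ActsCocompactly Γ) {f : ℂ → ℝ} (hf : ContinuousOn f UH) (hinv : GammaInv Γ f) :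
    ∃ z ∈ UH, IsMaxOn f UH z := by
  obtain ⟨_, ⟨z, hz, rfl⟩, hmax⟩ :=
    (hΓ.isCompact_image hf hinv).exists_isGreatest ⟨_, Set.mem_image_of_mem f I_mem_UH⟩
  exact ⟨z, hz, fun w hw => hmax (Set.mem_image_of_mem f hw)⟩

def principalCurvature (φ : ℂ → ℂ) (t : ℝ) (u : ℂ → ℝ) (z : ℂ) : ℝ :=
  t * z.im ^ 2 * ‖φ z‖ * Real.exp (-2 * u z)

section PrincipalCurvature

variable {φ : ℂ → ℂ} {t : ℝ} {u : ℂ → ℝ}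

theorem principalCurvature_nonneg (ht : 0 ≤ t) (z : ℂ) : 0 ≤ principalCurvature φ t u z := by
  unfold principalCurvature
  positivity

theorem continuousOn_principalCurvature {s : Set ℂ} (hφ : ContinuousOn φ s)
    (hu : ContinuousOn u s) : ContinuousOn (principalCurvature φ t u) s := by
  unfold principalCurvature
  fun_prop

theorem gammaInv_principalCurvature {Γ : Subgroup (Matrix.SpecialLinearGroup (Fin 2) ℝ)}
    (hφ : ∀ γ ∈ Γ, ∀ z ∈ UH, φ (moebius γ z) = UpperHalfPlane.denom γ z ^ 4 * φ z)
    (hu : GammaInv Γ u) : GammaInv Γ (principalCurvature φ t u) := by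
  intro γ hγ z hz
  simp only [principalCurvature, mul_assoc, hu γ hγ z hz]
  rw [← mul_assoc (_ ^ 2), im_sq_mul_norm_moebius γ hz (hφ γ hγ z hz), mul_assoc]

theorem GaussEq.hypLap_eq (h : GaussEq φ t u) {z : ℂ} (hz : z ∈ UH) :
    hypLap u z = Real.exp (2 * u z) * (1 + principalCurvature φ t u z ^ 2) - 1 := by
  have hexp : Real.exp (2 * u z) * Real.exp (-2 * u z) ^ 2 = Real.exp (-2 * u z) := by
    rw [sq, ← mul_assoc, ← Real.exp_add, ← Real.exp_add]; ring_nf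
  have := h z hz
  unfold principalCurvature
  linear_combination this - t ^ 2 * z.im ^ 4 * ‖φ z‖ ^ 2 * hexp

end PrincipalCurvature

section GaussEquation

variable {Γ : Subgroup (Matrix.SpecialLinearGroup (Fin 2) ℝ)} {φ : ℂ → ℂ} {t : ℝ} {u : ℂ → ℝ}

theorem GaussEq.neg_half_log_le_of_isLocalMin (h : GaussEq φ t u) {z : ℂ} (hz : z ∈ UH)
    (hmin : IsLocalMin u z) (hu : ContDiffAt ℝ 2 u z) :
    -(1 / 2) * Real.log (1 + principalCurvature φ t u z ^ 2) ≤ u z := by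
  have hΔ := hmin.hypLap_nonneg hu
  rw [h.hypLap_eq hz] at hΔ
  have hexp : Real.exp (-2 * u z) ≤ 1 + principalCurvature φ t u z ^ 2 :=
    calc Real.exp (-2 * u z) = Real.exp (-2 * u z) * 1 := (mul_one _).symm
      _ ≤ Real.exp (-2 * u z) * (Real.exp (2 * u z) * (1 + principalCurvature φ t u z ^ 2)) := by
        gcongr; linarith
      _ = 1 + principalCurvature φ t u z ^ 2 := by
        rw [← mul_assoc, ← Real.exp_add]; simp
  linarith [(Real.le_log_iff_exp_le (by positivity)).2 hexp]

theorem GaussEq.nonpos_of_isLocalMax (h : GaussEq φ t u) {z : ℂ} (hz : z ∈ UH)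
    (hmax : IsLocalMax u z) (hu : ContDiffAt ℝ 2 u z) : u z ≤ 0 := by
  have hΔ := hmax.hypLap_nonpos hu
  rw [h.hypLap_eq hz] at hΔ
  have hexp : Real.exp (2 * u z) ≤ 1 := by
    nlinarith [Real.exp_pos (2 * u z), sq_nonneg (principalCurvature φ t u z)]
  linarith [Real.exp_le_one_iff.1 hexp]

theorem GaussEq.mapsTo_Icc (h : GaussEq φ t u) (hΓ : ActsCocompactly Γ)
    (hφ : ContinuousOn φ UH)
    (hφeq : ∀ γ ∈ Γ, ∀ z ∈ UH, φ (moebius γ z) = UpperHalfPlane.denom γ z ^ 4 * φ z)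
    (ht : 0 ≤ t) (hu : ContDiffOn ℝ 2 u UH) (hinv : GammaInv Γ u) :
    Set.MapsTo u UH
      (Set.Icc (-(1 / 2) * Real.log (1 + sSup (principalCurvature φ t u '' UH) ^ 2)) 0) := by
  have hu₂ {z : ℂ} (hz : z ∈ UH) : ContDiffAt ℝ 2 u z := hu.contDiffAt (isOpen_UH.mem_nhds hz)
  obtain ⟨z₀, hz₀, hmin⟩ := hΓ.exists_isMinOn hu.continuousOn hinv
  obtain ⟨z₁, hz₁, hmax⟩ := hΓ.exists_isMaxOn hu.continuousOn hinv
  have hbdd : BddAbove (principalCurvature φ t u '' UH) :=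
    (hΓ.isCompact_image (continuousOn_principalCurvature hφ hu.continuousOn)
      (gammaInv_principalCurvature hφeq hinv)).bddAbove
  have hcurv_le : principalCurvature φ t u z₀ ≤ sSup (principalCurvature φ t u '' UH) :=
    le_csSup hbdd (Set.mem_image_of_mem _ hz₀)
  have hcurv_nonneg := principalCurvature_nonneg (φ := φ) (u := u) ht z₀
  intro z hz
  constructor
  · calc -(1 / 2) * Real.log (1 + sSup (principalCurvature φ t u '' UH) ^ 2)
        ≤ -(1 / 2) * Real.log (1 + principalCurvature φ t u z₀ ^ 2) := by
          rw [neg_mul, neg_mul, neg_le_neg_iff]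
          gcongr
      _ ≤ u z₀ := h.neg_half_log_le_of_isLocalMin hz₀
          (hmin.isLocalMin (isOpen_UH.mem_nhds hz₀)) (hu₂ hz₀)
      _ ≤ u z := hmin hz
  · exact (hmax hz).trans
      (h.nonpos_of_isLocalMax hz₁ (hmax.isLocalMax (isOpen_UH.mem_nhds hz₁)) (hu₂ hz₁))

theorem sSup_principalCurvature_le_sSup_abs (hΓ : ActsCocompactly Γ) (hφ : ContinuousOn φ UH)
    (hφeq : ∀ γ ∈ Γ, ∀ z ∈ UH, φ (moebius γ z) = UpperHalfPlane.denom γ z ^ 4 * φ z)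
    (hu : ContinuousOn u UH) (hinv : GammaInv Γ u) :
    sSup (principalCurvature φ t u '' UH)
      ≤ sSup ((fun z => |(-1 : ℝ) - principalCurvature φ t u z ^ 2|) '' UH) := by
  have hcurv := continuousOn_principalCurvature (t := t) hφ hu
  have hbdd : BddAbove (((fun x => |(-1 : ℝ) - x ^ 2|) ∘ principalCurvature φ t u) '' UH) :=
    (hΓ.isCompact_image ((by fun_prop : Continuous fun x : ℝ => |-1 - x ^ 2|).comp_continuousOn
      hcurv) ((gammaInv_principalCurvature hφeq hinv).comp _)).bddAbove
  refine csSup_le ⟨_, Set.mem_image_of_mem _ I_mem_UH⟩ (Set.forall_mem_image.2 fun z hz => ?_)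
  refine le_trans ?_ (le_csSup hbdd (Set.mem_image_of_mem _ hz))
  have hsq := sq_nonneg (principalCurvature φ t u z)
  rw [abs_of_neg (by linarith)]
  nlinarith [sq_nonneg (principalCurvature φ t u z - 1)]

end GaussEquation

theorem sSup_abs_le_of_mapsTo_Icc {α : Type*} {u : α → ℝ} {s : Set α} (hs : s.Nonempty) {a : ℝ}
    (h : Set.MapsTo u s (Set.Icc (-a) 0)) : sSup ((fun z => |u z|) '' s) ≤ a :=
  csSup_le (hs.image _) (Set.forall_mem_image.2 fun z hz => by
    rw [abs_of_nonpos (h hz).2]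
    linarith [(h hz).1])

theorem Real.exp_le_one_add_of_le_half_log {S Λ : ℝ} (hΛ : 0 ≤ Λ)
    (h : S ≤ 1 / 2 * Real.log (1 + Λ ^ 2)) : Real.exp S ≤ 1 + Λ := by
  rw [← Real.le_log_iff_exp_le (by positivity)]
  have hlog : Real.log (1 + Λ ^ 2) ≤ Real.log ((1 + Λ) ^ 2) :=
    Real.log_le_log (by positivity) (by nlinarith)
  rw [Real.log_pow, Nat.cast_ofNat] at hlog
  linarith

theorem tendsto_atTop_of_le_half_log {ι : Type*} {l : Filter ι} {S Λ : ι → ℝ}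
    (hΛ : ∀ i, 0 ≤ Λ i) (h : ∀ i, S i ≤ 1 / 2 * Real.log (1 + Λ i ^ 2))
    (hS : Tendsto S l atTop) : Tendsto Λ l atTop :=
  tendsto_atTop_mono
    (fun i => by
      rw [Function.comp_apply]
      linarith [Real.exp_le_one_add_of_le_half_log (hΛ i) (h i)])
    (tendsto_atTop_add_const_right l (-1) (Real.tendsto_exp_atTop.comp hS))

theorem inf_bound_and_curvature_blow_up_general
    (Γ : Subgroup (Matrix.SpecialLinearGroup (Fin 2) ℝ))
    (hcocompact : ∃ K : Set ℂ, K ⊆ UH ∧ IsCompact K ∧ ∀ z ∈ UH, ∃ γ ∈ Γ, moebius γ z ∈ K)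
    (φ : ℂ → ℂ) (hφ : DifferentiableOn ℂ φ UH)
    (hφeq : ∀ γ ∈ Γ, ∀ z ∈ UH,
      φ (moebius γ z) = (((γ 1 0 : ℝ) : ℂ) * z + ((γ 1 1 : ℝ) : ℂ)) ^ 4 * φ z)
 :
    (∀ t : ℝ, 0 ≤ t → ∀ u : ℂ → ℝ, ContDiffOn ℝ 2 u UH → GammaInv Γ u → GaussEq φ t u →
      -(1 / 2) * Real.log (1 +
          (sSup ((fun z => t * z.im ^ 2 * ‖φ z‖ * Real.exp (-2 * u z)) '' UH)) ^ 2)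
        ≤ sInf (u '' UH))
    ∧
    (∀ (t : ℕ → ℝ) (u : ℕ → ℂ → ℝ), (∀ n, 0 < t n) → Tendsto t atTop (nhds 0) →
      (∀ n, ContDiffOn ℝ 2 (u n) UH) → (∀ n, GammaInv Γ (u n)) →
      (∀ n, GaussEq φ (t n) (u n)) →
      Tendsto (fun n => sSup ((fun z => |u n z|) '' UH)) atTop atTop →
      (Tendsto (fun n =>
          sSup ((fun z => t n * z.im ^ 2 * ‖φ z‖ * Real.exp (-2 * u n z)) '' UH))
          atTop atTop ∧
       Tendsto (fun n =>
          sSup ((fun z =>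
            |(-1 : ℝ) - (t n * z.im ^ 2 * ‖φ z‖ * Real.exp (-2 * u n z)) ^ 2|) '' UH))
          atTop atTop)) := by
  have hUH : UH.Nonempty := ⟨_, I_mem_UH⟩
  refine ⟨fun t ht u hu hinv hgauss => ?_, fun t u ht _ hu hinv hgauss hblow => ?_⟩
  · exact le_csInf (hUH.image u) (Set.forall_mem_image.2 fun z hz =>
      (hgauss.mapsTo_Icc hcocompact hφ.continuousOn hφeq ht hu hinv hz).1)
  · have hΛ : Tendsto (fun n => sSup (principalCurvature φ (t n) (u n) '' UH)) atTop atTop := by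
      refine tendsto_atTop_of_le_half_log
        (fun n => Real.sSup_nonneg (Set.forall_mem_image.2 fun z _ =>
          principalCurvature_nonneg (ht n).le z)) (fun n => ?_) hblow
      refine sSup_abs_le_of_mapsTo_Icc hUH ?_
      simpa only [neg_mul] using
        (hgauss n).mapsTo_Icc hcocompact hφ.continuousOn hφeq (ht n).le (hu n) (hinv n)
    exact ⟨hΛ, tendsto_atTop_mono (fun n => sSup_principalCurvature_le_sSup_abs hcocompact
      hφ.continuousOn hφeq (hu n).continuousOn (hinv n)) hΛ⟩

theorem inf_bound_and_curvature_blow_up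
    (Γ : Subgroup (Matrix.SpecialLinearGroup (Fin 2) ℝ))
    (hfree : ∀ γ ∈ Γ, γ ≠ 1 → ∀ z ∈ UH, moebius γ z ≠ z)
    (hdisc : ∀ K : Set ℂ, K ⊆ UH → IsCompact K →
      {γ : Matrix.SpecialLinearGroup (Fin 2) ℝ | γ ∈ Γ ∧ ((moebius γ '' K) ∩ K).Nonempty}.Finite)
    (hcocompact : ∃ K : Set ℂ, K ⊆ UH ∧ IsCompact K ∧ ∀ z ∈ UH, ∃ γ ∈ Γ, moebius γ z ∈ K)
    (φ : ℂ → ℂ) (hφ : DifferentiableOn ℂ φ UH)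
    (hφeq : ∀ γ ∈ Γ, ∀ z ∈ UH,
      φ (moebius γ z) = (((γ 1 0 : ℝ) : ℂ) * z + ((γ 1 1 : ℝ) : ℂ)) ^ 4 * φ z)
 :
    (∀ t : ℝ, 0 ≤ t → ∀ u : ℂ → ℝ, ContDiffOn ℝ 2 u UH → GammaInv Γ u → GaussEq φ t u →
      -(1 / 2) * Real.log (1 +
          (sSup ((fun z => t * z.im ^ 2 * ‖φ z‖ * Real.exp (-2 * u z)) '' UH)) ^ 2)
        ≤ sInf (u '' UH))
    ∧
    (∀ (t : ℕ → ℝ) (u : ℕ → ℂ → ℝ), (∀ n, 0 < t n) → Tendsto t atTop (nhds 0) →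
      (∀ n, ContDiffOn ℝ 2 (u n) UH) → (∀ n, GammaInv Γ (u n)) →
      (∀ n, GaussEq φ (t n) (u n)) →
      Tendsto (fun n => sSup ((fun z => |u n z|) '' UH)) atTop atTop →
      (Tendsto (fun n =>
          sSup ((fun z => t n * z.im ^ 2 * ‖φ z‖ * Real.exp (-2 * u n z)) '' UH))
          atTop atTop ∧
       Tendsto (fun n =>
          sSup ((fun z =>
            |(-1 : ℝ) - (t n * z.im ^ 2 * ‖φ z‖ * Real.exp (-2 * u n z)) ^ 2|) '' UH))
          atTop atTop)) :=
  inf_bound_and_curvature_blow_up_general Γ hcocompact φ hφ hφeq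
end
end

section
/- Let K : ℍ → ℝ be a continuous Γ-invariant function with K(z) ≤ −1 for all z ∈ ℍ. If u₁ and u₂ are Γ-invariant C² functions on ℍ satisfying the prescribed curvature equation −Δu_i − 1 = K(z) e^{2u_i} for i = 1, 2, then u₁ ≡ u₂. -/
open Complex MeasureTheory Real Filter

noncomputable section

/-! At a maximum point of `u₁ - u₂`, which exists because the function is `Γ`-invariant and
`Γ` is cocompact, the Laplacian of `u₁ - u₂` is nonpositive, so `K (e^{2u₁} - e^{2u₂}) ≥ 0` there.
As `K < 0`, this gives `u₁ ≤ u₂` at the maximum point and hence everywhere; by symmetry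
`u₁ = u₂`. -/

open Topology

theorem IsLocalMax.deriv_deriv_nonpos {f : ℝ → ℝ} {x : ℝ} (hmax : IsLocalMax f x)
    (hc : ContinuousAt f x) : deriv (deriv f) x ≤ 0 := by
  by_contra! hpos
  -- Otherwise `x` is also a local minimum, so `f` is constant near `x`.
  have hconst : f =ᶠ[𝓝 x] fun _ => f x :=
    (hmax.and (isLocalMin_of_deriv_deriv_pos hpos hmax.deriv_eq_zero hc)).mono
      fun _ hy => le_antisymm hy.1 hy.2
  have hderiv : deriv f =ᶠ[𝓝 x] fun _ => 0 := by
    simpa using hconst.deriv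
  simp [hderiv.deriv_eq] at hpos

theorem IsLocalMax.iteratedFDeriv_two_nonpos_s7 {E : Type*} [NormedAddCommGroup E]
    [NormedSpace ℝ E] {f : E → ℝ} {x : E} (hmax : IsLocalMax f x) (hf : ContDiffAt ℝ 2 f x)
    (v : E) : iteratedFDeriv ℝ 2 f x (fun _ => v) ≤ 0 := by
  set line : ℝ → E := fun s => x + s • v
  have hline : Continuous line := by fun_prop
  have hline0 : line 0 = x := by simp [line]
  rw [← hline0] at hmax hf ⊢
  have hderiv : deriv (f ∘ line)
      =ᶠ[𝓝 0] fun s => iteratedFDeriv ℝ 1 f (line s) (fun _ => v) := by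
    filter_upwards [hline.continuousAt.eventually (hf.eventually (by simp))] with s hs
    simpa [line, Function.comp_def] using (hs.of_le one_le_two).deriv_fderiv_add_smul (n := 0)
  have hf' : ContDiffAt ℝ (1 + 1) f (line 0) := by rwa [one_add_one_eq_two]
  calc iteratedFDeriv ℝ 2 f (line 0) (fun _ => v)
      = deriv (deriv (f ∘ line)) 0 := by
        rw [hderiv.deriv_eq]
        exact hf'.deriv_fderiv_add_smul.symm
    _ ≤ 0 := (hmax.comp_continuous hline.continuousAt).deriv_deriv_nonpos
        (hf.continuousAt.comp hline.continuousAt)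

theorem hypLap_sub {u₁ u₂ : ℂ → ℝ} {z : ℂ} (hu₁ : ContDiffAt ℝ 2 u₁ z)
    (hu₂ : ContDiffAt ℝ 2 u₂ z) : hypLap (u₁ - u₂) z = hypLap u₁ z - hypLap u₂ z := by
  simp only [hypLap, iteratedFDeriv_sub_apply hu₁ hu₂, sub_apply]
  ring

theorem GammaInv.sub {Γ : Subgroup (Matrix.SpecialLinearGroup (Fin 2) ℝ)} {u₁ u₂ : ℂ → ℝ}
    (h₁ : GammaInv Γ u₁) (h₂ : GammaInv Γ u₂) : GammaInv Γ (u₁ - u₂) :=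
  fun γ hγ z hz => by simp [h₁ γ hγ z hz, h₂ γ hγ z hz]

theorem GammaInv.exists_isMaxOn {Γ : Subgroup (Matrix.SpecialLinearGroup (Fin 2) ℝ)}
    (hcocompact : ∃ K : Set ℂ, K ⊆ UH ∧ IsCompact K ∧ ∀ z ∈ UH, ∃ γ ∈ Γ, moebius γ z ∈ K)
    {w : ℂ → ℝ} (hw : ContinuousOn w UH) (hinv : GammaInv Γ w) :
    ∃ z₀ ∈ UH, IsMaxOn w UH z₀ := by
  obtain ⟨K, hKsub, hKcpt, hcover⟩ := hcocompact
  have hKne : K.Nonempty := by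
    obtain ⟨γ, -, hγ⟩ := hcover I (by simp [UH])
    exact ⟨_, hγ⟩
  obtain ⟨z₀, hz₀, hmax⟩ := hKcpt.exists_isMaxOn hKne (hw.mono hKsub)
  refine ⟨z₀, hKsub hz₀, fun z hz => ?_⟩
  obtain ⟨γ, hγ, hγz⟩ := hcover z hz
  calc w z = w (moebius γ z) := (hinv γ hγ z hz).symm
    _ ≤ w z₀ := hmax hγz

theorem le_of_isLocalMax_sub {u₁ u₂ : ℂ → ℝ} {z : ℂ} {k : ℝ} (hk : k < 0)
    (hu₁ : ContDiffAt ℝ 2 u₁ z) (hu₂ : ContDiffAt ℝ 2 u₂ z) (hmax : IsLocalMax (u₁ - u₂) z)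
    (heq₁ : -hypLap u₁ z - 1 = k * Real.exp (2 * u₁ z))
    (heq₂ : -hypLap u₂ z - 1 = k * Real.exp (2 * u₂ z)) : u₁ z ≤ u₂ z := by
  have hlap : hypLap u₁ z ≤ hypLap u₂ z := by
    have := hmax.hypLap_nonpos (hu₁.sub hu₂)
    rw [hypLap_sub hu₁ hu₂] at this
    linarith
  have hexp : Real.exp (2 * u₁ z) ≤ Real.exp (2 * u₂ z) :=
    (mul_le_mul_left_of_neg hk).1 (by linarith)
  linarith [Real.exp_le_exp.1 hexp]

theorem le_of_prescribedCurvature {Γ : Subgroup (Matrix.SpecialLinearGroup (Fin 2) ℝ)}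
    (hcocompact : ∃ K : Set ℂ, K ⊆ UH ∧ IsCompact K ∧ ∀ z ∈ UH, ∃ γ ∈ Γ, moebius γ z ∈ K)
    {K : ℂ → ℝ} (hKneg : ∀ z ∈ UH, K z < 0) {u₁ u₂ : ℂ → ℝ}
    (hu₁ : ContDiffOn ℝ 2 u₁ UH) (hu₁inv : GammaInv Γ u₁)
    (hu₂ : ContDiffOn ℝ 2 u₂ UH) (hu₂inv : GammaInv Γ u₂)
    (heq₁ : ∀ z ∈ UH, -hypLap u₁ z - 1 = K z * Real.exp (2 * u₁ z))
    (heq₂ : ∀ z ∈ UH, -hypLap u₂ z - 1 = K z * Real.exp (2 * u₂ z)) :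
    ∀ z ∈ UH, u₁ z ≤ u₂ z := by
  obtain ⟨z₀, hz₀, hmax⟩ := (hu₁inv.sub hu₂inv).exists_isMaxOn hcocompact
    (hu₁.continuousOn.sub hu₂.continuousOn)
  have hnhds : UH ∈ 𝓝 z₀ := isOpen_UH.mem_nhds hz₀
  have hle : u₁ z₀ ≤ u₂ z₀ :=
    le_of_isLocalMax_sub (hKneg z₀ hz₀) (hu₁.contDiffAt hnhds) (hu₂.contDiffAt hnhds)
      (hmax.isLocalMax hnhds) (heq₁ z₀ hz₀) (heq₂ z₀ hz₀)
  intro z hz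
  have : u₁ z - u₂ z ≤ u₁ z₀ - u₂ z₀ := hmax hz
  linarith

theorem prescribed_negative_curvature_uniqueness_general
    (Γ : Subgroup (Matrix.SpecialLinearGroup (Fin 2) ℝ))
    (hcocompact : ∃ K : Set ℂ, K ⊆ UH ∧ IsCompact K ∧ ∀ z ∈ UH, ∃ γ ∈ Γ, moebius γ z ∈ K)
    (K : ℂ → ℝ)
    (hKneg : ∀ z ∈ UH, K z ≤ -1)
    (u₁ u₂ : ℂ → ℝ)
    (hu₁ : ContDiffOn ℝ 2 u₁ UH) (hu₁inv : GammaInv Γ u₁)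
    (hu₂ : ContDiffOn ℝ 2 u₂ UH) (hu₂inv : GammaInv Γ u₂)
    (heq₁ : ∀ z ∈ UH, -hypLap u₁ z - 1 = K z * Real.exp (2 * u₁ z))
    (heq₂ : ∀ z ∈ UH, -hypLap u₂ z - 1 = K z * Real.exp (2 * u₂ z)) :
    ∀ z ∈ UH, u₁ z = u₂ z := by
  have hKlt : ∀ z ∈ UH, K z < 0 := fun z hz => by linarith [hKneg z hz]
  intro z hz
  exact le_antisymm
    (le_of_prescribedCurvature hcocompact hKlt hu₁ hu₁inv hu₂ hu₂inv heq₁ heq₂ z hz)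
    (le_of_prescribedCurvature hcocompact hKlt hu₂ hu₂inv hu₁ hu₁inv heq₂ heq₁ z hz)

theorem prescribed_negative_curvature_uniqueness
    (Γ : Subgroup (Matrix.SpecialLinearGroup (Fin 2) ℝ))
    (hfree : ∀ γ ∈ Γ, γ ≠ 1 → ∀ z ∈ UH, moebius γ z ≠ z)
    (hdisc : ∀ K : Set ℂ, K ⊆ UH → IsCompact K →
      {γ : Matrix.SpecialLinearGroup (Fin 2) ℝ | γ ∈ Γ ∧ ((moebius γ '' K) ∩ K).Nonempty}.Finite)
    (hcocompact : ∃ K : Set ℂ, K ⊆ UH ∧ IsCompact K ∧ ∀ z ∈ UH, ∃ γ ∈ Γ, moebius γ z ∈ K)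
    (K : ℂ → ℝ) (hKcont : ContinuousOn K UH) (hKinv : GammaInv Γ K)
    (hKneg : ∀ z ∈ UH, K z ≤ -1)
    (u₁ u₂ : ℂ → ℝ)
    (hu₁ : ContDiffOn ℝ 2 u₁ UH) (hu₁inv : GammaInv Γ u₁)
    (hu₂ : ContDiffOn ℝ 2 u₂ UH) (hu₂inv : GammaInv Γ u₂)
    (heq₁ : ∀ z ∈ UH, -hypLap u₁ z - 1 = K z * Real.exp (2 * u₁ z))
    (heq₂ : ∀ z ∈ UH, -hypLap u₂ z - 1 = K z * Real.exp (2 * u₂ z)) :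
    ∀ z ∈ UH, u₁ z = u₂ z :=
  prescribed_negative_curvature_uniqueness_general Γ hcocompact K hKneg u₁ u₂ hu₁ hu₁inv hu₂ hu₂inv
    heq₁ heq₂

end
end

section
/- Let φ be a holomorphic quadratic differential on the closed surface S = ℍ/Γ (of genus g ≥ 2) which is not identically zero. Then φ must vanish somewhere: there exists z ∈ ℍ with φ(z) = 0. (Otherwise y²|φ| would induce a smooth flat metric |φ||dz|² on S, violating the Gauss–Bonnet theorem.) -/
open Complex MeasureTheory Real Filter

noncomputable section

/-!
If `φ` had no zero, `h(z) = y² |φ(z)|` would be a positive `Γ`-invariant continuous function, so by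
cocompactness it would attain a positive minimum at some `z₀ ∈ ℍ`. Then `H(z) = φ(z) (z - z̄₀)⁴` is
holomorphic and zero-free on `ℍ`, and the identity `|z - z̄₀|² = |z - z₀|² + 4 y y₀` gives
`|H(z)| ≥ 16 y₀² h(z) ≥ 16 y₀² h(z₀) = |H(z₀)|`. By the minimum modulus principle `|H|` is constant,
but the first inequality is strict away from `z₀`.
-/

open ComplexConjugate

lemma Matrix.SpecialLinearGroup.det_fin_two_eq_one {R : Type*} [CommRing R]
    (γ : Matrix.SpecialLinearGroup (Fin 2) R) : γ 0 0 * γ 1 1 - γ 0 1 * γ 1 0 = 1 := by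
  rw [← Matrix.det_fin_two]; exact γ.2

lemma moebius_denom_ne_zero (γ : Matrix.SpecialLinearGroup (Fin 2) ℝ) {z : ℂ} (hz : 0 < z.im) :
    ((γ 1 0 : ℝ) : ℂ) * z + ((γ 1 1 : ℝ) : ℂ) ≠ 0 := by
  intro h
  have hc : γ 1 0 = 0 := by
    have him : γ 1 0 * z.im = 0 := by simpa using congrArg Complex.im h
    exact (mul_eq_zero.1 him).resolve_right hz.ne'
  have hd : γ 1 1 = 0 := by simpa [hc] using congrArg Complex.re h
  simpa [hc, hd] using γ.det_fin_two_eq_one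

lemma moebius_im (γ : Matrix.SpecialLinearGroup (Fin 2) ℝ) (z : ℂ) :
    (moebius γ z).im = z.im / normSq (((γ 1 0 : ℝ) : ℂ) * z + ((γ 1 1 : ℝ) : ℂ)) := by
  rw [moebius, Complex.div_im, div_sub_div_same]
  congr 1
  simp only [add_im, add_re, mul_im, mul_re, ofReal_re, ofReal_im]
  linear_combination z.im * γ.det_fin_two_eq_one

lemma gammaInv_im_sq_mul_norm {Γ : Subgroup (Matrix.SpecialLinearGroup (Fin 2) ℝ)} {φ : ℂ → ℂ}
    (hφeq : ∀ γ ∈ Γ, ∀ z ∈ UH,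
      φ (moebius γ z) = (((γ 1 0 : ℝ) : ℂ) * z + ((γ 1 1 : ℝ) : ℂ)) ^ 4 * φ z) :
    GammaInv Γ (fun z => z.im ^ 2 * ‖φ z‖) := by
  intro γ hγ z hz
  have hj : normSq (((γ 1 0 : ℝ) : ℂ) * z + ((γ 1 1 : ℝ) : ℂ)) ≠ 0 :=
    normSq_eq_zero.not.2 (moebius_denom_ne_zero γ hz)
  simp only [moebius_im, hφeq γ hγ z hz, norm_mul, norm_pow]
  rw [show (4 : ℕ) = 2 * 2 from rfl, pow_mul, Complex.sq_norm]
  field_simp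

lemma exists_isMinOn_of_gammaInv {Γ : Subgroup (Matrix.SpecialLinearGroup (Fin 2) ℝ)}
    (hcocompact : ∃ K : Set ℂ, K ⊆ UH ∧ IsCompact K ∧ ∀ z ∈ UH, ∃ γ ∈ Γ, moebius γ z ∈ K)
    {u : ℂ → ℝ} (hu : ContinuousOn u UH) (hinv : GammaInv Γ u) :
    ∃ z₀ ∈ UH, IsMinOn u UH z₀ := by
  obtain ⟨K, hKU, hKc, hcov⟩ := hcocompact
  have hI : I ∈ UH := by simp [UH]
  obtain ⟨γI, -, hγI⟩ := hcov I hI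
  obtain ⟨z₀, hz₀, hmin⟩ := hKc.exists_isMinOn ⟨_, hγI⟩ (hu.mono hKU)
  refine ⟨z₀, hKU hz₀, fun z hz => ?_⟩
  obtain ⟨γ, hγ, hγz⟩ := hcov z hz
  simpa [hinv γ hγ z hz] using hmin hγz

lemma normSq_sub_conj (z w : ℂ) : normSq (z - conj w) = normSq (z - w) + 4 * z.im * w.im := by
  simp only [normSq_apply, sub_re, sub_im, conj_re, conj_im]
  ring

lemma norm_eqOn_of_isPreconnected_of_isMinOn_norm {E : Type*} [NormedAddCommGroup E]
    [NormedSpace ℂ E] {f : E → ℂ} {U : Set E} {c : E} (hc : IsPreconnected U) (ho : IsOpen U)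
    (hd : DifferentiableOn ℂ f U) (hf : ∀ z ∈ U, f z ≠ 0) (hcU : c ∈ U)
    (hm : IsMinOn (norm ∘ f) U c) {z : E} (hz : z ∈ U) : ‖f z‖ = ‖f c‖ := by
  have hmax : IsMaxOn (norm ∘ fun z => (f z)⁻¹) U c := fun z hz => by
    simpa [norm_inv] using inv_anti₀ (norm_pos_iff.2 (hf c hcU)) (hm hz)
  simpa [norm_inv] using
    Complex.norm_eqOn_of_isPreconnected_of_isMaxOn hc ho (hd.inv hf) hcU hmax hz

lemma not_isMinOn_im_sq_mul_norm {φ : ℂ → ℂ} (hφ : DifferentiableOn ℂ φ UH)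
    (hφ0 : ∀ z ∈ UH, φ z ≠ 0) {z₀ : ℂ} (hz₀ : z₀ ∈ UH) :
    ¬ IsMinOn (fun z => z.im ^ 2 * ‖φ z‖) UH z₀ := by
  intro hmin
  set H : ℂ → ℂ := fun z => φ z * (z - conj z₀) ^ 4
  have hy₀ : 0 < z₀.im := hz₀
  have hnormH (z : ℂ) :
      ‖H z‖ = ‖φ z‖ * (normSq (z - z₀) + 4 * z.im * z₀.im) ^ 2 := by
    rw [norm_mul, norm_pow, show (4 : ℕ) = 2 * 2 from rfl, pow_mul, Complex.sq_norm, normSq_sub_conj]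
  have hH0 (z : ℂ) (hz : z ∈ UH) : H z ≠ 0 := by
    refine mul_ne_zero (hφ0 z hz) (pow_ne_zero _ fun h => ?_)
    have : z.im + z₀.im = 0 := by simpa using congrArg Complex.im h
    linarith [show 0 < z.im from hz]
  -- `‖H z₀‖ = 16 y₀² h(z₀) ≤ 16 y₀² h(z)`
  have hlower (z : ℂ) (hz : z ∈ UH) : ‖H z₀‖ ≤ ‖φ z‖ * (4 * z.im * z₀.im) ^ 2 := by
    have : z₀.im ^ 2 * ‖φ z₀‖ ≤ z.im ^ 2 * ‖φ z‖ := hmin hz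
    rw [hnormH, sub_self, map_zero, zero_add]
    nlinarith [sq_nonneg z₀.im]
  have hHmin : IsMinOn (norm ∘ H) UH z₀ := fun z hz => by
    refine (hlower z hz).trans ?_
    rw [Function.comp_apply, hnormH]
    have : 0 ≤ 4 * z.im * z₀.im := by have : 0 < z.im := hz; positivity
    gcongr
    exact le_add_of_nonneg_left (normSq_nonneg _)
  have hw : z₀ + I ∈ UH := by show 0 < (z₀ + I).im; simp; linarith
  have hconst : ‖H (z₀ + I)‖ = ‖H z₀‖ := norm_eqOn_of_isPreconnected_of_isMinOn_norm
    (convex_halfSpace_im_gt 0).isPreconnected (isOpen_lt continuous_const continuous_im)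
    (hφ.mul ((differentiable_id.sub_const _).pow 4).differentiableOn) hH0 hz₀ hHmin hw
  have hstrict : ‖φ (z₀ + I)‖ * (4 * (z₀ + I).im * z₀.im) ^ 2 < ‖H (z₀ + I)‖ := by
    rw [hnormH, add_sub_cancel_left, normSq_I]
    have : 0 < ‖φ (z₀ + I)‖ := norm_pos_iff.2 (hφ0 _ hw)
    have : 0 < (z₀ + I).im := hw
    gcongr
    linarith
  linarith [hlower _ hw]

theorem holomorphic_quadratic_differential_vanishes_general
    (Γ : Subgroup (Matrix.SpecialLinearGroup (Fin 2) ℝ))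
    (hcocompact : ∃ K : Set ℂ, K ⊆ UH ∧ IsCompact K ∧ ∀ z ∈ UH, ∃ γ ∈ Γ, moebius γ z ∈ K)
    (φ : ℂ → ℂ) (hφ : DifferentiableOn ℂ φ UH)
    (hφeq : ∀ γ ∈ Γ, ∀ z ∈ UH,
      φ (moebius γ z) = (((γ 1 0 : ℝ) : ℂ) * z + ((γ 1 1 : ℝ) : ℂ)) ^ 4 * φ z) :
    ∃ z ∈ UH, φ z = 0 := by
  by_contra! hφ0
  have hcont : ContinuousOn (fun z => z.im ^ 2 * ‖φ z‖) UH :=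
    (continuous_im.pow 2).continuousOn.mul hφ.continuousOn.norm
  obtain ⟨z₀, hz₀, hmin⟩ := exists_isMinOn_of_gammaInv hcocompact hcont (gammaInv_im_sq_mul_norm hφeq)
  exact not_isMinOn_im_sq_mul_norm hφ hφ0 hz₀ hmin

theorem holomorphic_quadratic_differential_vanishes
    (Γ : Subgroup (Matrix.SpecialLinearGroup (Fin 2) ℝ))
    (hfree : ∀ γ ∈ Γ, γ ≠ 1 → ∀ z ∈ UH, moebius γ z ≠ z)
    (hdisc : ∀ K : Set ℂ, K ⊆ UH → IsCompact K →
      {γ : Matrix.SpecialLinearGroup (Fin 2) ℝ | γ ∈ Γ ∧ ((moebius γ '' K) ∩ K).Nonempty}.Finite)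
    (hcocompact : ∃ K : Set ℂ, K ⊆ UH ∧ IsCompact K ∧ ∀ z ∈ UH, ∃ γ ∈ Γ, moebius γ z ∈ K)
    (φ : ℂ → ℂ) (hφ : DifferentiableOn ℂ φ UH)
    (hφeq : ∀ γ ∈ Γ, ∀ z ∈ UH,
      φ (moebius γ z) = (((γ 1 0 : ℝ) : ℂ) * z + ((γ 1 1 : ℝ) : ℂ)) ^ 4 * φ z)
    (hφne : ∃ z ∈ UH, φ z ≠ 0) :
    ∃ z ∈ UH, φ z = 0 :=
  holomorphic_quadratic_differential_vanishes_general Γ hcocompact φ hφ hφeq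

end
end

section
/- Let A be a real symmetric 2×2 matrix and v ∈ ℝ, and define the matrix-valued function g : ℝ → M₂(ℝ) by g(r) = e^{2v}·(cosh(r)·I + sinh(r)·e^{−2v}·A)², where I is the 2×2 identity matrix. Then for every r ∈ ℝ at which g(r) is invertible, g satisfies the second-order matrix ODE (1/2)·g''(r) − (1/4)·g'(r)·g(r)⁻¹·g'(r) = g(r), where derivatives are taken entrywise. -/
open Real

noncomputable section

/-- Entrywise derivative of a matrix-valued function of a real variable. -/
noncomputable def mderiv (g : ℝ → Matrix (Fin 2) (Fin 2) ℝ) (r : ℝ) :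
    Matrix (Fin 2) (Fin 2) ℝ :=
  Matrix.of fun i j => deriv (fun s => g s i j) r

/-!
With `B r = cosh r • 1 + sinh r • M` and `M = e^{-2v} A` we have `g = c • B²`, `c = e^{2v}`.
The companion `D r = sinh r • 1 + cosh r • M` satisfies `B' = D` and `D' = B`, and `B`, `D`
commute because both lie in the commutative algebra generated by `M`. Hence `g' = 2c • D B` and
`g'' = 2c • (B² + D²)`, while `B` and `D` also commute with `g⁻¹`, so `g' g⁻¹ g' = 4c • D²`.
The `D²` terms cancel and `g''/2 - g' g⁻¹ g'/4 = c • B² = g`.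
-/

open scoped Ring

theorem Commute.ringInverse_right {M₀ : Type*} [MonoidWithZero M₀] {a b : M₀} (h : Commute a b) :
    Commute a b⁻¹ʳ := by
  by_cases hb : IsUnit b
  · obtain ⟨u, rfl⟩ := hb
    rw [Ring.inverse_unit]
    exact h.units_inv_right
  · rw [Ring.inverse_non_unit b hb]
    exact .zero_right a

theorem mul_mul_ringInverse_smul_sq_mul_mul {R : Type*} [Ring R] [Algebra ℝ R] {B D : R}
    (hBD : Commute B D) {c : ℝ} (hc : c ≠ 0) (hg : IsUnit (c • B ^ 2)) :
    D * B * (c • B ^ 2)⁻¹ʳ * (D * B) = c⁻¹ • D ^ 2 := by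
  have hBG : Commute B (c • B ^ 2)⁻¹ʳ :=
    (((Commute.refl B).pow_right 2).smul_right c).ringInverse_right
  have hDG : Commute D (c • B ^ 2)⁻¹ʳ := ((hBD.symm.pow_right 2).smul_right c).ringInverse_right
  have hBBG : B ^ 2 * (c • B ^ 2)⁻¹ʳ = c⁻¹ • 1 := by
    rw [← Ring.mul_inverse_cancel _ hg, smul_mul_assoc, smul_smul, inv_mul_cancel₀ hc, one_smul]
  have regroup (G : R) (hBG : Commute B G) (hDG : Commute D G) :
      D * B * G * (D * B) = D ^ 2 * (B ^ 2 * G) := by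
    simp only [sq, mul_assoc]
    rw [hDG.symm.left_comm, ← hBG.eq, hBD.left_comm]
  rw [regroup _ hBG hDG, hBBG, mul_smul_comm, mul_one]

def coshSinhComb {E : Type*} [AddCommMonoid E] [Module ℝ E] (X Y : E) (r : ℝ) : E :=
  cosh r • X + sinh r • Y

theorem hasDerivAt_coshSinhComb {E : Type*} [NormedAddCommGroup E] [NormedSpace ℝ E] (X Y : E)
    (r : ℝ) : HasDerivAt (coshSinhComb X Y) (coshSinhComb Y X r) r := by
  rw [coshSinhComb, add_comm]
  exact ((hasDerivAt_cosh r).smul_const X).add ((hasDerivAt_sinh r).smul_const Y)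

theorem commute_coshSinhComb {R : Type*} [Ring R] [Algebra ℝ R] (M : R) (r s : ℝ) :
    Commute (coshSinhComb 1 M r) (coshSinhComb M 1 s) := by
  have hM : Commute M M := .refl M
  unfold coshSinhComb
  apply_rules [Commute.add_left, Commute.add_right, Commute.smul_left, Commute.smul_right,
    Commute.one_left, Commute.one_right]

section NormedAlgebra

variable {𝔸 : Type*} [NormedRing 𝔸] [NormedAlgebra ℝ 𝔸]

theorem hasDerivAt_smul_coshSinhComb_sq (M : 𝔸) (c r : ℝ) :
    HasDerivAt (fun s => c • coshSinhComb 1 M s ^ 2)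
      ((2 * c) • (coshSinhComb M 1 r * coshSinhComb 1 M r)) r := by
  have h := ((hasDerivAt_coshSinhComb 1 M r).fun_mul
    (hasDerivAt_coshSinhComb 1 M r)).fun_const_smul c
  simp only [← sq] at h
  refine h.congr_deriv ?_
  rw [← (commute_coshSinhComb M r r).eq, mul_smul, two_smul, smul_add]

theorem hasDerivAt_smul_coshSinhComb_mul (M : 𝔸) (c r : ℝ) :
    HasDerivAt (fun s => c • (coshSinhComb M 1 s * coshSinhComb 1 M s))
      (c • (coshSinhComb 1 M r ^ 2 + coshSinhComb M 1 r ^ 2)) r := by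
  have h := ((hasDerivAt_coshSinhComb M 1 r).fun_mul
    (hasDerivAt_coshSinhComb 1 M r)).fun_const_smul c
  simpa only [sq, add_comm] using h

theorem deriv_smul_coshSinhComb_sq (M : 𝔸) (c : ℝ) :
    deriv (fun s => c • coshSinhComb 1 M s ^ 2)
      = fun s => (2 * c) • (coshSinhComb M 1 s * coshSinhComb 1 M s) :=
  funext fun s => (hasDerivAt_smul_coshSinhComb_sq M c s).deriv

theorem smul_coshSinhComb_sq_ode (M : 𝔸) {c : ℝ} (hc : c ≠ 0) (g : ℝ → 𝔸)
    (hg : g = fun s => c • coshSinhComb 1 M s ^ 2) {r : ℝ} (hr : IsUnit (g r)) :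
    (1 / 2 : ℝ) • deriv (deriv g) r - (1 / 4 : ℝ) • (deriv g r * (g r)⁻¹ʳ * deriv g r)
      = g r := by
  subst hg
  have hd2 := (hasDerivAt_smul_coshSinhComb_mul M (2 * c) r).deriv
  rw [← deriv_smul_coshSinhComb_sq] at hd2
  rw [hd2, deriv_smul_coshSinhComb_sq]
  beta_reduce at hr ⊢
  rw [smul_mul_assoc, smul_mul_assoc, mul_smul_comm, smul_smul,
    mul_mul_ringInverse_smul_sq_mul_mul (commute_coshSinhComb M r r) hc hr]
  match_scalars
  · field_simp
  · field_simp
    ring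

end NormedAlgebra

section MatrixDeriv

open scoped Matrix.Norms.Operator

-- Any norm on the matrices yields the entrywise derivative; the operator norm is chosen because
-- it makes them a normed algebra.
theorem mderiv_eq_deriv {g : ℝ → Matrix (Fin 2) (Fin 2) ℝ} (hg : Differentiable ℝ g) :
    mderiv g = deriv g := by
  ext r i j
  exact ((Matrix.entryLinearMap ℝ ℝ i j).toContinuousLinearMap.hasFDerivAt.comp_hasDerivAt r
    (hg r).hasDerivAt).deriv

theorem mderiv_smul_coshSinhComb_sq_ode (M : Matrix (Fin 2) (Fin 2) ℝ) {c : ℝ} (hc : c ≠ 0)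
    (g : ℝ → Matrix (Fin 2) (Fin 2) ℝ) (hg : g = fun s => c • coshSinhComb 1 M s ^ 2) {r : ℝ}
    (hr : IsUnit (g r)) :
    (1 / 2 : ℝ) • mderiv (mderiv g) r - (1 / 4 : ℝ) • (mderiv g r * (g r)⁻¹ * mderiv g r)
      = g r := by
  have hd : deriv g = _ := hg ▸ deriv_smul_coshSinhComb_sq M c
  have hmd : mderiv g = deriv g :=
    mderiv_eq_deriv fun s => (hg ▸ hasDerivAt_smul_coshSinhComb_sq M c s).differentiableAt
  have hmdd : mderiv (mderiv g) = deriv (deriv g) := by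
    rw [hmd]
    exact mderiv_eq_deriv fun s =>
      hd ▸ (hasDerivAt_smul_coshSinhComb_mul M _ s).differentiableAt
  rw [hmdd, hmd, Matrix.nonsing_inv_eq_ringInverse]
  exact smul_coshSinhComb_sq_ode M hc g hg hr

end MatrixDeriv

theorem normal_bundle_metric_ode_general
    (A : Matrix (Fin 2) (Fin 2) ℝ) (v : ℝ)
    (g : ℝ → Matrix (Fin 2) (Fin 2) ℝ)
    (hg : ∀ r : ℝ, g r = Real.exp (2 * v) •
      (Real.cosh r • (1 : Matrix (Fin 2) (Fin 2) ℝ)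
        + Real.sinh r • (Real.exp (-2 * v) • A)) ^ 2) :
    ∀ r : ℝ, IsUnit (g r) →
      (1 / 2 : ℝ) • mderiv (mderiv g) r
        - (1 / 4 : ℝ) • (mderiv g r * (g r)⁻¹ * mderiv g r) = g r :=
  fun _ hr => mderiv_smul_coshSinhComb_sq_ode _ (Real.exp_pos (2 * v)).ne' g (funext hg) hr

theorem normal_bundle_metric_ode
    (A : Matrix (Fin 2) (Fin 2) ℝ) (hA : A.IsSymm) (v : ℝ)
    (g : ℝ → Matrix (Fin 2) (Fin 2) ℝ)
    (hg : ∀ r : ℝ, g r = Real.exp (2 * v) •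
      (Real.cosh r • (1 : Matrix (Fin 2) (Fin 2) ℝ)
        + Real.sinh r • (Real.exp (-2 * v) • A)) ^ 2) :
    ∀ r : ℝ, IsUnit (g r) →
      (1 / 2 : ℝ) • mderiv (mderiv g) r
        - (1 / 4 : ℝ) • (mderiv g r * (g r)⁻¹ * mderiv g r) = g r :=
  normal_bundle_metric_ode_general A v g hg

end
end
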